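/- arXiv:1802.00080 — 6 statements merged into one kernel-verified Lean document; each statement's English description precedes it below -/
import Mathlib

section
/- Let U : ℝⁿ × ℝⁿ → ℝ be continuously differentiable and α_U-strongly concave in its first argument for every fixed second argument, with ∇_s U(s, z) uniformly ℓ_U-Lipschitz in z. For each x ∈ [0,1] let S(x) ⊆ ℝⁿ be nonempty, closed and convex, and define the best-response map (Bz)(x) = argmax_{s ∈ S(x)} U(s, z(x)). Then B is Lipschitz from L²([0,1]; ℝⁿ) to itself with constant ℓ_U/α_U: ‖Bf − Bg‖ ≤ (ℓ_U/α_U)·‖f − g‖ for all f, g ∈ L²([0,1]; ℝⁿ). -/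
/-!
Since `U(·, z) + α/2‖·‖²` is concave it lies below its tangent planes; adding the tangent bounds
at two points shows that `-∇U(·, z)` is strongly monotone:
`α‖s₂ - s₁‖² ≤ ⟪∇U(s₁, z) - ∇U(s₂, z), s₂ - s₁⟫`. For best responses `s₁`, `s₂` to `z₁`, `z₂` over
the same convex set, the optimality conditions `⟪∇U(s₁, z₁), s₂ - s₁⟫ ≤ 0` and
`⟪∇U(s₂, z₂), s₁ - s₂⟫ ≤ 0` bound the right side (at `z = z₁`) by
`⟪∇U(s₂, z₂) - ∇U(s₂, z₁), s₂ - s₁⟫ ≤ ℓ‖z₁ - z₂‖‖s₁ - s₂‖`, whence `‖s₁ - s₂‖ ≤ (ℓ/α)‖z₁ - z₂‖`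
pointwise; squaring and integrating gives the `L²` estimate.
-/

open MeasureTheory Set AffineMap
open scoped RealInnerProductSpace Gradient

theorem StrongConcaveOn.subset {E : Type*} [NormedAddCommGroup E] [NormedSpace ℝ E] {s t : Set E}
    {m : ℝ} {f : E → ℝ} (hf : StrongConcaveOn t m f) (hst : s ⊆ t) (hs : Convex ℝ s) :
    StrongConcaveOn s m f :=
  ⟨hs, fun _ hx _ hy => hf.2 (hst hx) (hst hy)⟩

variable {E : Type*} [NormedAddCommGroup E] [InnerProductSpace ℝ E] [CompleteSpace E]

theorem HasGradientAt.hasDerivAt_comp_lineMap {φ : E → ℝ} {G x : E} (hG : HasGradientAt φ G x)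
    (y : E) : HasDerivAt (φ ∘ lineMap (k := ℝ) x y) ⟪G, y - x⟫ 0 := by
  simpa using hG.hasFDerivAt.comp_hasDerivAt_of_eq (0 : ℝ) hasDerivAt_lineMap (by simp)

theorem ConcaveOn.le_add_inner_of_hasGradientAt {φ : E → ℝ} {s : Set E} {G x y : E}
    (hφ : ConcaveOn ℝ s φ) (hx : x ∈ s) (hy : y ∈ s) (hG : HasGradientAt φ G x) :
    φ y ≤ φ x + ⟪G, y - x⟫ := by
  have hline : ConcaveOn ℝ (lineMap (k := ℝ) x y ⁻¹' s) (φ ∘ lineMap x y) := hφ.comp_affineMap _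
  have := hline.slope_le_of_hasDerivAt (x := 0) (y := 1) (by simpa using hx) (by simpa using hy)
    zero_lt_one (hG.hasDerivAt_comp_lineMap y)
  simp only [slope_def_field, Function.comp_apply, lineMap_apply_one, lineMap_apply_zero, sub_zero,
    div_one] at this
  linarith

theorem HasGradientAt.add_mul_norm_sq {h : E → ℝ} {G x : E} (hG : HasGradientAt h G x) (c : ℝ) :
    HasGradientAt (fun z => h z + c * ‖z‖ ^ 2) (G + (2 * c) • x) x := by
  rw [hasGradientAt_iff_hasFDerivAt]
  refine (hG.hasFDerivAt.add
    ((hasStrictFDerivAt_norm_sq x).hasFDerivAt.const_mul c)).congr_fderiv ?_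
  ext v
  simp [← mul_assoc, mul_comm c 2]

theorem StrongConcaveOn.le_add_inner_sub_of_hasGradientAt {h : E → ℝ} {s : Set E} {α : ℝ}
    {G x y : E} (hh : StrongConcaveOn s α h) (hx : x ∈ s) (hy : y ∈ s)
    (hG : HasGradientAt h G x) :
    h y ≤ h x + ⟪G, y - x⟫ - α / 2 * ‖y - x‖ ^ 2 := by
  have := (strongConcaveOn_iff_convex.1 hh).le_add_inner_of_hasGradientAt hx hy
    (hG.add_mul_norm_sq (α / 2))
  rw [norm_sub_sq_real]
  simp only [inner_add_left, inner_sub_right, real_inner_smul_left, real_inner_self_eq_norm_sq,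
    real_inner_comm x y] at this ⊢
  linarith

theorem StrongConcaveOn.mul_norm_sub_sq_le_inner_of_hasGradientAt {h : E → ℝ} {s : Set E} {α : ℝ}
    {Gx Gy x y : E}
    (hh : StrongConcaveOn s α h) (hx : x ∈ s) (hy : y ∈ s) (hGx : HasGradientAt h Gx x)
    (hGy : HasGradientAt h Gy y) :
    α * ‖y - x‖ ^ 2 ≤ ⟪Gx - Gy, y - x⟫ := by
  have hxy := hh.le_add_inner_sub_of_hasGradientAt hx hy hGx
  have hyx := hh.le_add_inner_sub_of_hasGradientAt hy hx hGy
  rw [norm_sub_rev x y, ← neg_sub y x, inner_neg_right] at hyx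
  rw [inner_sub_left]
  linarith

theorem IsMaxOn.inner_le_zero_of_hasGradientAt {φ : E → ℝ} {s : Set E} {G x y : E}
    (hs : Convex ℝ s) (hmax : IsMaxOn φ s x) (hx : x ∈ s) (hy : y ∈ s)
    (hG : HasGradientAt φ G x) : ⟪G, y - x⟫ ≤ 0 := by
  simpa using hmax.localize.hasFDerivWithinAt_nonpos hG.hasFDerivAt.hasFDerivWithinAt
    (sub_mem_posTangentConeAt_of_segment_subset (hs.segment_subset hx hy))

theorem norm_sub_le_div_of_isMaxOn {φ₁ φ₂ : E → ℝ} {S : Set E} {α δ : ℝ} {s₁ s₂ : E}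
    (hα : 0 < α) (hconc : StrongConcaveOn S α φ₁) (hd₁ : Differentiable ℝ φ₁)
    (hd₂ : Differentiable ℝ φ₂) (hgrad : ‖∇ φ₁ s₂ - ∇ φ₂ s₂‖ ≤ δ)
    (hs₁ : s₁ ∈ S) (hs₂ : s₂ ∈ S) (hmax₁ : IsMaxOn φ₁ S s₁) (hmax₂ : IsMaxOn φ₂ S s₂) :
    ‖s₁ - s₂‖ ≤ δ / α := by
  have hmono : α * ‖s₂ - s₁‖ ^ 2 ≤ ⟪∇ φ₁ s₁ - ∇ φ₁ s₂, s₂ - s₁⟫ :=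
    hconc.mul_norm_sub_sq_le_inner_of_hasGradientAt hs₁ hs₂ (hd₁ s₁).hasGradientAt
      (hd₁ s₂).hasGradientAt
  have hopt₁ : ⟪∇ φ₁ s₁, s₂ - s₁⟫ ≤ 0 :=
    hmax₁.inner_le_zero_of_hasGradientAt hconc.1 hs₁ hs₂ (hd₁ s₁).hasGradientAt
  have hopt₂ : ⟪∇ φ₂ s₂, s₁ - s₂⟫ ≤ 0 :=
    hmax₂.inner_le_zero_of_hasGradientAt hconc.1 hs₂ hs₁ (hd₂ s₂).hasGradientAt
  have hcs : ⟪∇ φ₂ s₂ - ∇ φ₁ s₂, s₂ - s₁⟫ ≤ δ * ‖s₁ - s₂‖ := calc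
    _ ≤ ‖∇ φ₁ s₂ - ∇ φ₂ s₂‖ * ‖s₁ - s₂‖ := by
      rw [norm_sub_rev (∇ φ₁ s₂), norm_sub_rev s₁]; exact real_inner_le_norm _ _
    _ ≤ δ * ‖s₁ - s₂‖ := by gcongr
  rw [← neg_sub s₂ s₁, inner_neg_right] at hopt₂
  rw [inner_sub_left] at hmono hcs
  rw [norm_sub_rev] at hmono
  have hquad : α * ‖s₁ - s₂‖ ^ 2 ≤ δ * ‖s₁ - s₂‖ := by linarith
  rcases (norm_nonneg (s₁ - s₂)).eq_or_lt with h0 | hpos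
  · rw [← h0]; exact div_nonneg ((norm_nonneg _).trans hgrad) hα.le
  · rw [le_div_iff₀ hα]; nlinarith

theorem sqrt_integral_norm_sq_le_mul {X F : Type*} [MeasurableSpace X] {μ : Measure X}
    [NormedAddCommGroup F] {u v : X → F} {C : ℝ} (hC : 0 ≤ C)
    (hv : Integrable (fun x => ‖v x‖ ^ 2) μ) (hu : AEStronglyMeasurable u μ)
    (huv : ∀ᵐ x ∂μ, ‖u x‖ ≤ C * ‖v x‖) :
    √(∫ x, ‖u x‖ ^ 2 ∂μ) ≤ C * √(∫ x, ‖v x‖ ^ 2 ∂μ) := by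
  have hsq : ∀ᵐ x ∂μ, ‖u x‖ ^ 2 ≤ C ^ 2 * ‖v x‖ ^ 2 := by
    filter_upwards [huv] with x hx
    rw [← mul_pow]; exact pow_le_pow_left₀ (norm_nonneg _) hx 2
  have hu2 : Integrable (fun x => ‖u x‖ ^ 2) μ :=
    (hv.const_mul (C ^ 2)).mono' (hu.norm.pow 2) <| by
      filter_upwards [hsq] with x hx
      rwa [Real.norm_of_nonneg (by positivity)]
  calc √(∫ x, ‖u x‖ ^ 2 ∂μ) ≤ √(C ^ 2 * ∫ x, ‖v x‖ ^ 2 ∂μ) := by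
        rw [← integral_const_mul]
        exact Real.sqrt_le_sqrt (integral_mono_ae hu2 (hv.const_mul _) hsq)
    _ = C * √(∫ x, ‖v x‖ ^ 2 ∂μ) := by rw [Real.sqrt_mul (sq_nonneg C), Real.sqrt_sq hC]

/-- Lipschitz continuity of the best-response operator: with `U` continuously
differentiable, `αU`-strongly concave in its first argument and with gradient
`ℓU`-Lipschitz in the second argument, and pointwise best responses over nonempty
closed convex sets `SS x`, the best-response map is `(ℓU/αU)`-Lipschitz on
`L²([0,1]; ℝⁿ)`. -/
theorem stmt_8 {n : ℕ}
    (U : EuclideanSpace ℝ (Fin n) → EuclideanSpace ℝ (Fin n) → ℝ)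
    (αU ℓU : ℝ) (hα : 0 < αU) (hℓ : 0 ≤ ℓU)
    (hU : ContDiff ℝ 1 (Function.uncurry U))
    (hconc : ∀ z, StrongConcaveOn Set.univ αU (fun s => U s z))
    (hgrad : ∀ s z₁ z₂,
      ‖gradient (fun s' => U s' z₁) s - gradient (fun s' => U s' z₂) s‖ ≤ ℓU * ‖z₁ - z₂‖)
    (SS : ℝ → Set (EuclideanSpace ℝ (Fin n)))
    (hSS : ∀ x, (SS x).Nonempty ∧ IsClosed (SS x) ∧ Convex ℝ (SS x))
    (f g Bf Bg : ℝ → EuclideanSpace ℝ (Fin n))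
    (hBf : ∀ x, Bf x ∈ SS x ∧ IsMaxOn (fun s => U s (f x)) (SS x) (Bf x))
    (hBg : ∀ x, Bg x ∈ SS x ∧ IsMaxOn (fun s => U s (g x)) (SS x) (Bg x))
    (hintfg : IntegrableOn (fun x => ‖f x - g x‖ ^ 2) (Set.Icc (0:ℝ) 1))
    (hmeasB : AEStronglyMeasurable (fun x => Bf x - Bg x)
      ((volume : Measure ℝ).restrict (Set.Icc (0:ℝ) 1))) :
    Real.sqrt (∫ x in Set.Icc (0:ℝ) 1, ‖Bf x - Bg x‖ ^ 2) ≤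
      ℓU / αU * Real.sqrt (∫ x in Set.Icc (0:ℝ) 1, ‖f x - g x‖ ^ 2) := by
  have hdiff (z) : Differentiable ℝ (fun s => U s z) :=
    (hU.differentiable one_ne_zero).comp (differentiable_id.prodMk (differentiable_const z))
  have hpointwise (x : ℝ) : ‖Bf x - Bg x‖ ≤ ℓU / αU * ‖f x - g x‖ := by
    rw [div_mul_eq_mul_div]
    exact norm_sub_le_div_of_isMaxOn hα ((hconc (f x)).subset (subset_univ _) (hSS x).2.2)
      (hdiff _) (hdiff _) (hgrad (Bg x) (f x) (g x)) (hBf x).1 (hBg x).1 (hBf x).2 (hBg x).2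
  exact sqrt_integral_norm_sq_le_mul (div_nonneg hℓ hα.le) hintfg hmeasB (ae_of_all _ hpointwise)
end

section
/- Comparative statics bound: let B be an (ℓ_U/α_U)-Lipschitz operator on L²([0,1];ℝⁿ), let 𝕎_n and 𝕎̃_n be bounded linear operators with ‖𝕎_n‖ = λ_max(𝕎) satisfying (ℓ_U/α_U)·λ_max(𝕎) < 1. If s̄ = B𝕎_n s̄ and s̃ = B𝕎̃_n s̃, then ‖s̄ − s̃‖ ≤ (ℓ_U/α_U)·‖s̃‖·‖𝕎_n − 𝕎̃_n‖ / (1 − (ℓ_U/α_U)·λ_max(𝕎)). -/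
open MeasureTheory

noncomputable def mu01 : Measure ℝ := (volume : Measure ℝ).restrict (Set.Icc 0 1)

/-! Subtracting the two fixed point equations and using the Lipschitz bound on `B`,
`‖s̄ - s̃‖ ≤ k ‖W s̄ - W̃ s̃‖ ≤ k ‖W‖ ‖s̄ - s̃‖ + k ‖W - W̃‖ ‖s̃‖`, after splitting
`W s̄ - W̃ s̃ = W (s̄ - s̃) + (W - W̃) s̃`; since `k ‖W‖ < 1`, the first term can be absorbed
into the left-hand side. -/

section PerturbedFixedPoint

variable {𝕜 : Type*} [NontriviallyNormedField 𝕜] {E F : Type*}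
  [SeminormedAddCommGroup E] [NormedSpace 𝕜 E] [SeminormedAddCommGroup F] [NormedSpace 𝕜 F]

theorem ContinuousLinearMap.norm_apply_sub_apply_le (W W' : E →L[𝕜] F) (x y : E) :
    ‖W x - W' y‖ ≤ ‖W‖ * ‖x - y‖ + ‖W - W'‖ * ‖y‖ := by
  have hsplit : W x - W' y = W (x - y) + (W - W') y := by
    simp only [map_sub, sub_apply, sub_add_sub_cancel]
  rw [hsplit]
  exact (norm_add_le _ _).trans (add_le_add (W.le_opNorm _) ((W - W').le_opNorm _))

theorem norm_sub_le_of_isFixedPt_comp_perturbed {k : ℝ} (hk : 0 ≤ k) {B : F → E}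
    (hB : ∀ u v, ‖B u - B v‖ ≤ k * ‖u - v‖) {W W' : E →L[𝕜] F} (hkW : k * ‖W‖ < 1)
    {x y : E} (hx : B (W x) = x) (hy : B (W' y) = y) :
    ‖x - y‖ ≤ k * ‖y‖ * ‖W - W'‖ / (1 - k * ‖W‖) := by
  have hbound : ‖x - y‖ ≤ k * ‖W‖ * ‖x - y‖ + k * ‖y‖ * ‖W - W'‖ :=
    calc ‖x - y‖ = ‖B (W x) - B (W' y)‖ := by rw [hx, hy]
      _ ≤ k * ‖W x - W' y‖ := hB _ _
      _ ≤ k * (‖W‖ * ‖x - y‖ + ‖W - W'‖ * ‖y‖) :=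
          mul_le_mul_of_nonneg_left (W.norm_apply_sub_apply_le W' x y) hk
      _ = k * ‖W‖ * ‖x - y‖ + k * ‖y‖ * ‖W - W'‖ := by ring
  rw [le_div_iff₀ (sub_pos.mpr hkW)]
  linarith

end PerturbedFixedPoint

/-- Comparative statics bound: for an `(ℓU/αU)`-Lipschitz operator `B` on
`L²([0,1];ℝⁿ)` and bounded linear operators `Wn`, `Wtn` with `‖Wn‖ = λ_max(𝕎)`
satisfying `(ℓU/αU)·λ_max(𝕎) < 1`, if `s̄ = B(Wn s̄)` and `s̃ = B(Wtn s̃)`, then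
`‖s̄ − s̃‖ ≤ (ℓU/αU)·‖s̃‖·‖Wn − Wtn‖ / (1 − (ℓU/αU)·λ_max(𝕎))`. -/
theorem stmt_10 {n : ℕ} (ℓU αU lam : ℝ) (hα : 0 < αU) (hℓ : 0 ≤ ℓU)
    (B : Lp (EuclideanSpace ℝ (Fin n)) 2 mu01 → Lp (EuclideanSpace ℝ (Fin n)) 2 mu01)
    (Wn Wtn : Lp (EuclideanSpace ℝ (Fin n)) 2 mu01 →L[ℝ] Lp (EuclideanSpace ℝ (Fin n)) 2 mu01)
    (hB : ∀ u v, ‖B u - B v‖ ≤ ℓU / αU * ‖u - v‖)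
    (hWn : ‖Wn‖ = lam)
    (hcond : ℓU / αU * lam < 1)
    (sb st : Lp (EuclideanSpace ℝ (Fin n)) 2 mu01)
    (hsb : B (Wn sb) = sb) (hst : B (Wtn st) = st) :
    ‖sb - st‖ ≤ ℓU / αU * ‖st‖ * ‖Wn - Wtn‖ / (1 - ℓU / αU * lam) := by
  subst hWn
  exact norm_sub_le_of_isFixedPt_comp_perturbed (div_nonneg hℓ hα.le) hB hcond hsb hst
end

section
/- Linear quadratic graphon game with complements: suppose U(s,z) = −½s² + s(αz + β) with α > 0, β > 0, strategy sets S(x) = ℝ_{≥0}, and α·λ_max(𝕎) < 1 where 𝕎 is the graphon operator of W. Then the unique Nash equilibrium s̄ of the graphon game is strictly positive and is given by s̄ = β·(I − α𝕎)^{−1} 1, where 1 is the constant function equal to one; i.e., s̄ satisfies s̄(x) = α∫₀¹W(x,y)s̄(y)dy + β for a.e. x. -/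
/-!
On `[0,1]` with Lebesgue measure (a probability space) the kernel satisfies `0 ≤ W ≤ 1`, so `𝕎`
is positive and `α𝕎` is an `L²` contraction with constant `q = α·lam < 1`. For a nonnegative
profile `s` the aggregate `α 𝕎 s + β` is positive, so the constraint `s ≥ 0` never binds and
equilibria are exactly the solutions of `s = α 𝕎 s + β`; the difference of two of them solves
`d = α 𝕎 d` and vanishes by the contraction estimate.

For existence, the Picard iterates `f₀ = 0`, `fₖ₊₁ = α 𝕎 fₖ + β` (the partial sums of the Neumann
series `β Σ (α𝕎)ᵏ 1`) increase, and their increments have `L²` norm at most `β qᵏ`. As `𝕎` maps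
`L¹` into bounded functions, the increments are also bounded pointwise by `α β qᵏ⁻¹`, so the
iterates increase to a bounded limit, which is a fixed point by dominated convergence.
-/

open MeasureTheory

/-- A Nash equilibrium of the scalar linear quadratic graphon game with payoff
`U(s,z) = −½s² + s(αz + β)` and strategy sets `ℝ_{≥0}`: a square-integrable
measurable `s` with `s(x) = max{0, α ∫₀¹ W(x,y)s(y)dy + β}` on `[0,1]`. -/
def IsLQGraphonNash (W : ℝ → ℝ → ℝ) (α β : ℝ) (s : ℝ → ℝ) : Prop :=
  Measurable s ∧ IntegrableOn (fun x => s x ^ 2) (Set.Icc (0:ℝ) 1) ∧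
    ∀ x ∈ Set.Icc (0:ℝ) 1,
      s x = max 0 (α * (∫ y in Set.Icc (0:ℝ) 1, W x y * s y) + β)

open Filter Set Topology Function

local notation "𝕀" => Icc (0:ℝ) 1

instance : IsProbabilityMeasure (volume.restrict 𝕀) := ⟨by simp⟩

lemma sq_integral_le_integral_sq {Ω : Type*} [MeasurableSpace Ω] {μ : Measure Ω}
    [IsProbabilityMeasure μ] {f : Ω → ℝ} (hf : MemLp f 2 μ) :
    (∫ ω, f ω ∂μ) ^ 2 ≤ ∫ ω, f ω ^ 2 ∂μ := by
  have h := ProbabilityTheory.variance_nonneg f μ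
  rwa [ProbabilityTheory.variance_eq_sub hf, sub_nonneg] at h

lemma integrableOn_of_abs_le {f : ℝ → ℝ} {C : ℝ} (hf : Measurable f) (hC : ∀ x, |f x| ≤ C) :
    IntegrableOn f 𝕀 :=
  Measure.integrableOn_of_bounded (by simp) hf.aestronglyMeasurable (ae_of_all _ hC)

lemma integrableOn_sq_of_abs_le {f : ℝ → ℝ} {C : ℝ} (hf : Measurable f)
    (hC : ∀ x, |f x| ≤ C) : IntegrableOn (fun x => f x ^ 2) 𝕀 :=
  integrableOn_of_abs_le (C := C ^ 2) (hf.pow_const 2) fun x => by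
    rw [abs_pow]; exact pow_le_pow_left₀ (abs_nonneg _) (hC x) 2

noncomputable def graphonOp (W : ℝ → ℝ → ℝ) (f : ℝ → ℝ) (x : ℝ) : ℝ :=
  ∫ y in 𝕀, W x y * f y

/-- The spectral hypothesis `λ_max(𝕎) ≤ lam`, as an operator-norm bound on `L²([0,1])`
tested on measurable representatives. -/
def L2OpNormLE (W : ℝ → ℝ → ℝ) (lam : ℝ) : Prop :=
  ∀ f : ℝ → ℝ, Measurable f → IntegrableOn (fun x => f x ^ 2) 𝕀 →
    ∫ x in 𝕀, graphonOp W f x ^ 2 ≤ lam ^ 2 * ∫ x in 𝕀, f x ^ 2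

section graphonOp

variable {W : ℝ → ℝ → ℝ} {f g : ℝ → ℝ} {x : ℝ}

lemma ae_norm_kernel_le_one (hbd : ∀ x ∈ 𝕀, ∀ y ∈ 𝕀, W x y ∈ 𝕀) (hx : x ∈ 𝕀) :
    ∀ᵐ y ∂volume.restrict 𝕀, ‖W x y‖ ≤ 1 :=
  ae_restrict_of_forall_mem measurableSet_Icc fun y hy =>
    abs_le.2 ⟨by linarith [(hbd x hx y hy).1], (hbd x hx y hy).2⟩

lemma integrableOn_kernel_mul (hW : Measurable (uncurry W))
    (hbd : ∀ x ∈ 𝕀, ∀ y ∈ 𝕀, W x y ∈ 𝕀) (hx : x ∈ 𝕀) (hf : IntegrableOn f 𝕀) :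
    IntegrableOn (fun y => W x y * f y) 𝕀 :=
  hf.bdd_mul (hW.comp measurable_prodMk_left).aestronglyMeasurable (ae_norm_kernel_le_one hbd hx)

lemma measurable_graphonOp (hW : Measurable (uncurry W)) (hf : Measurable f) :
    Measurable (graphonOp W f) :=
  (StronglyMeasurable.integral_prod_right' (f := fun p : ℝ × ℝ => W p.1 p.2 * f p.2)
    (hW.mul (hf.comp measurable_snd)).stronglyMeasurable).measurable

lemma graphonOp_sub (hW : Measurable (uncurry W)) (hbd : ∀ x ∈ 𝕀, ∀ y ∈ 𝕀, W x y ∈ 𝕀)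
    (hx : x ∈ 𝕀) (hf : IntegrableOn f 𝕀) (hg : IntegrableOn g 𝕀) :
    graphonOp W (f - g) x = graphonOp W f x - graphonOp W g x := by
  simp only [graphonOp, Pi.sub_apply, mul_sub]
  exact integral_sub (integrableOn_kernel_mul hW hbd hx hf) (integrableOn_kernel_mul hW hbd hx hg)

lemma graphonOp_nonneg (hbd : ∀ x ∈ 𝕀, ∀ y ∈ 𝕀, W x y ∈ 𝕀) (hx : x ∈ 𝕀)
    (hf : ∀ y ∈ 𝕀, 0 ≤ f y) : 0 ≤ graphonOp W f x :=
  setIntegral_nonneg measurableSet_Icc fun y hy => mul_nonneg (hbd x hx y hy).1 (hf y hy)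

lemma graphonOp_le_integral (hW : Measurable (uncurry W))
    (hbd : ∀ x ∈ 𝕀, ∀ y ∈ 𝕀, W x y ∈ 𝕀) (hx : x ∈ 𝕀) (hf : IntegrableOn f 𝕀)
    (hf0 : ∀ y ∈ 𝕀, 0 ≤ f y) : graphonOp W f x ≤ ∫ y in 𝕀, f y :=
  setIntegral_mono_on (integrableOn_kernel_mul hW hbd hx hf) hf measurableSet_Icc fun y hy =>
    mul_le_of_le_one_left (hf0 y hy) (hbd x hx y hy).2

lemma abs_graphonOp_le (hbd : ∀ x ∈ 𝕀, ∀ y ∈ 𝕀, W x y ∈ 𝕀) (hx : x ∈ 𝕀) {C : ℝ}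
    (hC : ∀ y, |f y| ≤ C) : |graphonOp W f x| ≤ C := by
  have h := norm_integral_le_of_norm_le_const ((ae_norm_kernel_le_one hbd hx).mono fun y hy =>
    (norm_mul_le _ _).trans ((mul_le_of_le_one_left (norm_nonneg _) hy).trans (hC y)))
  simpa [graphonOp] using h

lemma tendsto_graphonOp (hW : Measurable (uncurry W)) (hbd : ∀ x ∈ 𝕀, ∀ y ∈ 𝕀, W x y ∈ 𝕀)
    (hx : x ∈ 𝕀) {F : ℕ → ℝ → ℝ} {D : ℝ} (hF : ∀ k, Measurable (F k))
    (hD : ∀ k y, |F k y| ≤ D) (hlim : ∀ y, Tendsto (F · y) atTop (𝓝 (f y))) :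
    Tendsto (fun k => graphonOp W (F k) x) atTop (𝓝 (graphonOp W f x)) :=
  tendsto_integral_of_dominated_convergence (fun _ => D)
    (fun k => ((hW.comp measurable_prodMk_left).mul (hF k)).aestronglyMeasurable)
    (integrable_const D)
    (fun k => (ae_norm_kernel_le_one hbd hx).mono fun y hy =>
      (norm_mul_le _ _).trans ((mul_le_of_le_one_left (norm_nonneg _) hy).trans (hD k y)))
    (ae_of_all _ fun y => (hlim y).const_mul (W x y))

lemma integral_sq_le_of_eq_mul_graphonOp {lam α : ℝ} (hop : L2OpNormLE W lam)
    (hf : Measurable f) (hf2 : IntegrableOn (fun x => f x ^ 2) 𝕀)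
    (hg : ∀ x ∈ 𝕀, g x = α * graphonOp W f x) :
    ∫ x in 𝕀, g x ^ 2 ≤ (α * lam) ^ 2 * ∫ x in 𝕀, f x ^ 2 :=
  calc ∫ x in 𝕀, g x ^ 2 = α ^ 2 * ∫ x in 𝕀, graphonOp W f x ^ 2 := by
        rw [← integral_const_mul]
        exact setIntegral_congr_fun measurableSet_Icc fun x hx => by rw [hg x hx]; ring
    _ ≤ α ^ 2 * (lam ^ 2 * ∫ x in 𝕀, f x ^ 2) := by gcongr; exact hop f hf hf2
    _ = (α * lam) ^ 2 * ∫ x in 𝕀, f x ^ 2 := by ring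

/-- The contraction estimate only gives `f = 0` a.e.; rewriting `f` as `α 𝕎 f` upgrades this
to every point of `[0,1]`. -/
lemma eqOn_zero_of_eq_mul_graphonOp {lam α : ℝ} (hop : L2OpNormLE W lam) (hq0 : 0 ≤ α * lam)
    (hq1 : α * lam < 1) (hf : Measurable f) (hf2 : IntegrableOn (fun x => f x ^ 2) 𝕀)
    (hfix : ∀ x ∈ 𝕀, f x = α * graphonOp W f x) : ∀ x ∈ 𝕀, f x = 0 := by
  have hle := integral_sq_le_of_eq_mul_graphonOp hop hf hf2 hfix
  have hq : (α * lam) ^ 2 < 1 := pow_lt_one₀ hq0 hq1 two_ne_zero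
  have hnn : 0 ≤ ∫ x in 𝕀, f x ^ 2 := integral_nonneg fun x => sq_nonneg _
  have hzero : ∫ x in 𝕀, f x ^ 2 = 0 := by nlinarith
  have hae : f =ᵐ[volume.restrict 𝕀] 0 :=
    ((integral_eq_zero_iff_of_nonneg (fun x => sq_nonneg (f x)) hf2).mp hzero).mono
      fun y hy => pow_eq_zero_iff two_ne_zero |>.mp hy
  intro x hx
  rw [hfix x hx, graphonOp, integral_eq_zero_of_ae (hae.mono fun y hy => by simp [hy]),
    mul_zero]

end graphonOp

section Nash

variable {W : ℝ → ℝ → ℝ} {α β : ℝ} {s t : ℝ → ℝ}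

lemma IsLQGraphonNash.memLp (hs : IsLQGraphonNash W α β s) : MemLp s 2 (volume.restrict 𝕀) :=
  (memLp_two_iff_integrable_sq hs.1.aestronglyMeasurable).2 hs.2.1

lemma IsLQGraphonNash.pos_and_eq (hbd : ∀ x ∈ 𝕀, ∀ y ∈ 𝕀, W x y ∈ 𝕀) (hα : 0 ≤ α)
    (hβ : 0 < β) (hs : IsLQGraphonNash W α β s) {x : ℝ} (hx : x ∈ 𝕀) :
    0 < s x ∧ s x = α * graphonOp W s x + β := by
  have hs0 : ∀ y ∈ 𝕀, 0 ≤ s y := fun y hy => (hs.2.2 y hy).symm ▸ le_max_left _ _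
  have hpos : 0 < α * graphonOp W s x + β := by
    have := graphonOp_nonneg hbd hx hs0
    positivity
  have heq : s x = α * graphonOp W s x + β := (hs.2.2 x hx).trans (max_eq_right hpos.le)
  exact ⟨heq ▸ hpos, heq⟩

lemma IsLQGraphonNash.eqOn {lam : ℝ} (hW : Measurable (uncurry W))
    (hbd : ∀ x ∈ 𝕀, ∀ y ∈ 𝕀, W x y ∈ 𝕀) (hα : 0 ≤ α) (hβ : 0 < β) (hop : L2OpNormLE W lam)
    (hq0 : 0 ≤ α * lam) (hq1 : α * lam < 1) (hs : IsLQGraphonNash W α β s)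
    (ht : IsLQGraphonNash W α β t) : ∀ x ∈ 𝕀, s x = t x := by
  have hs2 := hs.memLp
  have ht2 := ht.memLp
  have hfix : ∀ x ∈ 𝕀, (s - t) x = α * graphonOp W (s - t) x := fun x hx => by
    rw [graphonOp_sub hW hbd hx (hs2.integrable one_le_two) (ht2.integrable one_le_two),
      Pi.sub_apply, (hs.pos_and_eq hbd hα hβ hx).2, (ht.pos_and_eq hbd hα hβ hx).2]
    ring
  intro x hx
  exact sub_eq_zero.1 <| eqOn_zero_of_eq_mul_graphonOp hop hq0 hq1 (hs.1.sub ht.1)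
    (hs2.sub ht2).integrable_sq hfix x hx

end Nash

/-- The best response `α 𝕎 f + β` to a nonnegative profile `f`, set to `0` off `[0,1]`. -/
noncomputable def lqResponse (W : ℝ → ℝ → ℝ) (α β : ℝ) (f : ℝ → ℝ) : ℝ → ℝ :=
  indicator 𝕀 fun x => α * graphonOp W f x + β

noncomputable def lqIterate (W : ℝ → ℝ → ℝ) (α β : ℝ) (k : ℕ) : ℝ → ℝ :=
  (lqResponse W α β)^[k] 0

section Iterate

variable {W : ℝ → ℝ → ℝ} {α β : ℝ}

lemma lqIterate_zero : lqIterate W α β 0 = 0 := rfl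

lemma lqIterate_succ (k : ℕ) :
    lqIterate W α β (k + 1) = lqResponse W α β (lqIterate W α β k) :=
  iterate_succ_apply' _ _ _

lemma lqIterate_one (x : ℝ) : lqIterate W α β 1 x = indicator 𝕀 (fun _ => β) x := by
  simp [lqIterate, lqResponse, graphonOp]

lemma measurable_lqIterate (hW : Measurable (uncurry W)) (k : ℕ) :
    Measurable (lqIterate W α β k) := by
  induction k with
  | zero => exact measurable_const
  | succ k ih =>
    rw [lqIterate_succ]
    exact (((measurable_graphonOp hW ih).const_mul α).add_const β).indicator measurableSet_Icc

lemma exists_abs_lqIterate_le (hbd : ∀ x ∈ 𝕀, ∀ y ∈ 𝕀, W x y ∈ 𝕀) (k : ℕ) :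
    ∃ C, ∀ x, |lqIterate W α β k x| ≤ C := by
  induction k with
  | zero => exact ⟨0, fun x => by simp [lqIterate]⟩
  | succ k ih =>
    obtain ⟨C, hC⟩ := ih
    refine ⟨|α| * C + |β|, fun x => ?_⟩
    have hC0 : 0 ≤ C := (abs_nonneg _).trans (hC x)
    rw [lqIterate_succ, lqResponse]
    by_cases hx : x ∈ 𝕀
    · rw [indicator_of_mem hx]
      calc |α * graphonOp W (lqIterate W α β k) x + β|
          ≤ |α| * |graphonOp W (lqIterate W α β k) x| + |β| := by
            rw [← abs_mul]; exact abs_add_le _ _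
        _ ≤ |α| * C + |β| := by gcongr; exact abs_graphonOp_le hbd hx hC
    · rw [indicator_of_notMem hx, abs_zero]
      positivity

lemma integrableOn_lqIterate (hW : Measurable (uncurry W))
    (hbd : ∀ x ∈ 𝕀, ∀ y ∈ 𝕀, W x y ∈ 𝕀) (k : ℕ) : IntegrableOn (lqIterate W α β k) 𝕀 :=
  have ⟨_, hC⟩ := exists_abs_lqIterate_le (α := α) (β := β) hbd k
  integrableOn_of_abs_le (measurable_lqIterate hW k) hC

lemma integrableOn_sq_lqIterate_sub (hW : Measurable (uncurry W))
    (hbd : ∀ x ∈ 𝕀, ∀ y ∈ 𝕀, W x y ∈ 𝕀) (k : ℕ) :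
    IntegrableOn (fun x => (lqIterate W α β (k + 1) x - lqIterate W α β k x) ^ 2) 𝕀 :=
  have ⟨C₁, hC₁⟩ := exists_abs_lqIterate_le (α := α) (β := β) hbd (k + 1)
  have ⟨C₂, hC₂⟩ := exists_abs_lqIterate_le (α := α) (β := β) hbd k
  integrableOn_sq_of_abs_le (C := C₁ + C₂)
    ((measurable_lqIterate hW (k + 1)).sub (measurable_lqIterate hW k))
    fun x => (abs_sub _ _).trans (add_le_add (hC₁ x) (hC₂ x))

lemma lqResponse_sub (hW : Measurable (uncurry W)) (hbd : ∀ x ∈ 𝕀, ∀ y ∈ 𝕀, W x y ∈ 𝕀)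
    {f g : ℝ → ℝ} (hf : IntegrableOn f 𝕀) (hg : IntegrableOn g 𝕀) (x : ℝ) :
    lqResponse W α β f x - lqResponse W α β g x =
      indicator 𝕀 (fun x => α * graphonOp W (f - g) x) x := by
  by_cases hx : x ∈ 𝕀
  · simp only [lqResponse, indicator_of_mem hx, graphonOp_sub hW hbd hx hf hg]
    ring
  · simp [lqResponse, indicator_of_notMem hx]

lemma lqIterate_sub_succ (hW : Measurable (uncurry W)) (hbd : ∀ x ∈ 𝕀, ∀ y ∈ 𝕀, W x y ∈ 𝕀)
    (k : ℕ) (x : ℝ) :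
    lqIterate W α β (k + 2) x - lqIterate W α β (k + 1) x =
      indicator 𝕀 (fun x => α * graphonOp W (lqIterate W α β (k + 1) - lqIterate W α β k) x) x := by
  have hint : ∀ j, IntegrableOn (lqIterate W α β j) 𝕀 := integrableOn_lqIterate hW hbd
  have h := lqResponse_sub (α := α) (β := β) hW hbd (hint (k + 1)) (hint k) x
  rwa [← lqIterate_succ, ← lqIterate_succ] at h

end Iterate

section Estimates

variable {W : ℝ → ℝ → ℝ} {α β lam : ℝ}

lemma lqIterate_le_succ (hW : Measurable (uncurry W)) (hbd : ∀ x ∈ 𝕀, ∀ y ∈ 𝕀, W x y ∈ 𝕀)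
    (hα : 0 ≤ α) (hβ : 0 ≤ β) (k : ℕ) (x : ℝ) :
    lqIterate W α β k x ≤ lqIterate W α β (k + 1) x := by
  induction k generalizing x with
  | zero => rw [lqIterate_one]; exact indicator_nonneg (fun _ _ => hβ) x
  | succ k ih =>
    rw [← sub_nonneg, lqIterate_sub_succ hW hbd]
    exact indicator_nonneg (fun x hx => mul_nonneg hα
      (graphonOp_nonneg hbd hx fun y _ => sub_nonneg.2 (ih y))) x

lemma integral_sq_lqIterate_sub_le (hW : Measurable (uncurry W))
    (hbd : ∀ x ∈ 𝕀, ∀ y ∈ 𝕀, W x y ∈ 𝕀) (hop : L2OpNormLE W lam) (k : ℕ) :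
    ∫ x in 𝕀, (lqIterate W α β (k + 1) x - lqIterate W α β k x) ^ 2 ≤
      (β * (α * lam) ^ k) ^ 2 := by
  induction k with
  | zero =>
    have hconst : ∀ x ∈ 𝕀, (lqIterate W α β 1 x - lqIterate W α β 0 x) ^ 2 = β ^ 2 :=
      fun x hx => by rw [lqIterate_one, indicator_of_mem hx, lqIterate_zero, Pi.zero_apply, sub_zero]
    simp [setIntegral_congr_fun measurableSet_Icc hconst]
  | succ k ih =>
    calc _ ≤ (α * lam) ^ 2 * ∫ x in 𝕀, (lqIterate W α β (k + 1) x - lqIterate W α β k x) ^ 2 :=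
          integral_sq_le_of_eq_mul_graphonOp hop
            ((measurable_lqIterate hW _).sub (measurable_lqIterate hW _))
            (integrableOn_sq_lqIterate_sub hW hbd k) fun x hx => by
              rw [lqIterate_sub_succ hW hbd, indicator_of_mem hx]
              rfl
      _ ≤ (α * lam) ^ 2 * (β * (α * lam) ^ k) ^ 2 := by gcongr
      _ = (β * (α * lam) ^ (k + 1)) ^ 2 := by ring

/-- One application of `𝕎` turns the `L²` decay of the increments into pointwise decay, since
`0 ≤ W ≤ 1` and `∫ Δ ≤ ‖Δ‖₂` on the probability space `[0,1]`. -/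
lemma lqIterate_sub_succ_le (hW : Measurable (uncurry W))
    (hbd : ∀ x ∈ 𝕀, ∀ y ∈ 𝕀, W x y ∈ 𝕀) (hop : L2OpNormLE W lam) (hα : 0 ≤ α) (hβ : 0 ≤ β)
    (hq0 : 0 ≤ α * lam) (k : ℕ) (x : ℝ) :
    lqIterate W α β (k + 2) x - lqIterate W α β (k + 1) x ≤ α * (β * (α * lam) ^ k) := by
  set Δ := lqIterate W α β (k + 1) - lqIterate W α β k
  have hΔ0 : ∀ y, 0 ≤ Δ y := fun y => sub_nonneg.2 (lqIterate_le_succ hW hbd hα hβ k y)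
  have hΔ : IntegrableOn Δ 𝕀 :=
    (integrableOn_lqIterate hW hbd _).sub (integrableOn_lqIterate hW hbd _)
  have hmean : ∫ y in 𝕀, Δ y ≤ β * (α * lam) ^ k := by
    have hΔ2 : MemLp Δ 2 (volume.restrict 𝕀) :=
      (memLp_two_iff_integrable_sq hΔ.aestronglyMeasurable).2
        (integrableOn_sq_lqIterate_sub hW hbd k)
    refine (pow_le_pow_iff_left₀ (integral_nonneg hΔ0) (by positivity) two_ne_zero).1 ?_
    exact (sq_integral_le_integral_sq hΔ2).trans (integral_sq_lqIterate_sub_le hW hbd hop k)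
  rw [lqIterate_sub_succ hW hbd]
  by_cases hx : x ∈ 𝕀
  · rw [indicator_of_mem hx]
    exact mul_le_mul_of_nonneg_left
      ((graphonOp_le_integral hW hbd hx hΔ fun y _ => hΔ0 y).trans hmean) hα
  · rw [indicator_of_notMem hx]
    positivity

lemma lqIterate_le (hW : Measurable (uncurry W)) (hbd : ∀ x ∈ 𝕀, ∀ y ∈ 𝕀, W x y ∈ 𝕀)
    (hop : L2OpNormLE W lam) (hα : 0 ≤ α) (hβ : 0 ≤ β) (hq0 : 0 ≤ α * lam)
    (hq1 : α * lam < 1) (k : ℕ) (x : ℝ) :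
    lqIterate W α β k x ≤ β + α * β / (1 - α * lam) := by
  have htelescope : lqIterate W α β (k + 1) x =
      ∑ j ∈ Finset.range k, (lqIterate W α β (j + 2) x - lqIterate W α β (j + 1) x) +
        lqIterate W α β 1 x := by
    have h := Finset.sum_range_sub (fun j => lqIterate W α β j x) (k + 1)
    rw [Finset.sum_range_succ'] at h
    simpa [lqIterate_zero] using h.symm
  have hgeom : ∑ j ∈ Finset.range k, (α * lam) ^ j ≤ 1 / (1 - α * lam) := by
    have h := geom_sum_Ico_le_of_lt_one (m := 0) (n := k) hq0 hq1
    rwa [pow_zero, ← Finset.range_eq_Ico] at h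
  calc lqIterate W α β k x ≤ lqIterate W α β (k + 1) x := lqIterate_le_succ hW hbd hα hβ k x
    _ ≤ ∑ j ∈ Finset.range k, α * (β * (α * lam) ^ j) + β := by
        rw [htelescope, lqIterate_one]
        exact add_le_add (Finset.sum_le_sum fun j _ => lqIterate_sub_succ_le hW hbd hop hα hβ hq0 j x)
          (indicator_le_self' (fun _ _ => hβ) x)
    _ = α * β * ∑ j ∈ Finset.range k, (α * lam) ^ j + β := by rw [Finset.mul_sum]; ring_nf
    _ ≤ α * β * (1 / (1 - α * lam)) + β := by gcongr
    _ = β + α * β / (1 - α * lam) := by ring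

end Estimates

lemma exists_isLQGraphonNash {W : ℝ → ℝ → ℝ} {α β lam : ℝ} (hW : Measurable (uncurry W))
    (hbd : ∀ x ∈ 𝕀, ∀ y ∈ 𝕀, W x y ∈ 𝕀) (hop : L2OpNormLE W lam) (hα : 0 ≤ α) (hβ : 0 ≤ β)
    (hq0 : 0 ≤ α * lam) (hq1 : α * lam < 1) : ∃ s, IsLQGraphonNash W α β s := by
  set D := β + α * β / (1 - α * lam)
  have hmono : ∀ x, Monotone (lqIterate W α β · x) := fun x =>
    monotone_nat_of_le_succ fun k => lqIterate_le_succ hW hbd hα hβ k x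
  have hle : ∀ k x, lqIterate W α β k x ≤ D := lqIterate_le hW hbd hop hα hβ hq0 hq1
  have hnonneg : ∀ k x, 0 ≤ lqIterate W α β k x := fun k x => hmono x k.zero_le
  have hbound : ∀ k x, |lqIterate W α β k x| ≤ D := fun k x =>
    (abs_of_nonneg (hnonneg k x)).trans_le (hle k x)
  set s := fun x => ⨆ k, lqIterate W α β k x
  have hlim : ∀ x, Tendsto (lqIterate W α β · x) atTop (𝓝 (s x)) := fun x =>
    tendsto_atTop_ciSup (hmono x) ⟨D, forall_mem_range.2 fun k => hle k x⟩
  have hs0 : ∀ x, 0 ≤ s x := fun x => ge_of_tendsto' (hlim x) fun k => hnonneg k x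
  have hsD : ∀ x, |s x| ≤ D := fun x =>
    (abs_of_nonneg (hs0 x)).trans_le (le_of_tendsto' (hlim x) fun k => hle k x)
  have hsmeas : Measurable s := Measurable.iSup fun k => measurable_lqIterate hW k
  have hfix : ∀ x ∈ 𝕀, s x = α * graphonOp W s x + β := fun x hx => by
    refine tendsto_nhds_unique ((hlim x).comp (tendsto_add_atTop_nat 1)) ?_
    refine (((tendsto_graphonOp hW hbd hx (measurable_lqIterate hW) hbound hlim).const_mul
      α).add_const β).congr fun k => ?_
    simp [lqIterate_succ, lqResponse, indicator_of_mem hx]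
  refine ⟨s, hsmeas, integrableOn_sq_of_abs_le hsmeas hsD, fun x hx => ?_⟩
  exact (hfix x hx).trans (max_eq_right ((hs0 x).trans_eq (hfix x hx))).symm

theorem stmt_12_general (W : ℝ → ℝ → ℝ)
    (hmeas : Measurable (Function.uncurry W))
    (hbd : ∀ x ∈ Set.Icc (0:ℝ) 1, ∀ y ∈ Set.Icc (0:ℝ) 1, W x y ∈ Set.Icc (0:ℝ) 1)
    (α β lam : ℝ) (hα : 0 < α) (hβ : 0 < β) (hlam : 0 ≤ lam)
    (hop : ∀ f : ℝ → ℝ, Measurable f →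
      IntegrableOn (fun x => f x ^ 2) (Set.Icc (0:ℝ) 1) →
      ∫ x in Set.Icc (0:ℝ) 1, (∫ y in Set.Icc (0:ℝ) 1, W x y * f y) ^ 2 ≤
        lam ^ 2 * ∫ x in Set.Icc (0:ℝ) 1, f x ^ 2)
    (hcond : α * lam < 1) :
    (∃ s : ℝ → ℝ, IsLQGraphonNash W α β s) ∧
    (∀ s : ℝ → ℝ, IsLQGraphonNash W α β s → ∀ x ∈ Set.Icc (0:ℝ) 1,
      0 < s x ∧ s x = α * (∫ y in Set.Icc (0:ℝ) 1, W x y * s y) + β) ∧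
    (∀ s t : ℝ → ℝ, IsLQGraphonNash W α β s → IsLQGraphonNash W α β t →
      ∀ x ∈ Set.Icc (0:ℝ) 1, s x = t x) := by
  have hq0 : 0 ≤ α * lam := mul_nonneg hα.le hlam
  exact ⟨exists_isLQGraphonNash hmeas hbd hop hα.le hβ.le hq0 hcond,
    fun s hs x hx => hs.pos_and_eq hbd hα.le hβ hx,
    fun s t hs ht => hs.eqOn hmeas hbd hα.le hβ hop hq0 hcond ht⟩

/-- Linear quadratic graphon game with strategic complements (`α > 0`, `β > 0`,
`α·λ_max(𝕎) < 1`): a Nash equilibrium exists, every Nash equilibrium is strictly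
positive and satisfies `s̄(x) = α ∫₀¹ W(x,y) s̄(y) dy + β` (i.e.
`s̄ = β (I − α𝕎)⁻¹ 1`), and the Nash equilibrium is unique. -/
theorem stmt_12 (W : ℝ → ℝ → ℝ)
    (hmeas : Measurable (Function.uncurry W))
    (hsym : ∀ x y, W x y = W y x)
    (hbd : ∀ x ∈ Set.Icc (0:ℝ) 1, ∀ y ∈ Set.Icc (0:ℝ) 1, W x y ∈ Set.Icc (0:ℝ) 1)
    (α β lam : ℝ) (hα : 0 < α) (hβ : 0 < β) (hlam : 0 ≤ lam)
    (hop : ∀ f : ℝ → ℝ, Measurable f →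
      IntegrableOn (fun x => f x ^ 2) (Set.Icc (0:ℝ) 1) →
      ∫ x in Set.Icc (0:ℝ) 1, (∫ y in Set.Icc (0:ℝ) 1, W x y * f y) ^ 2 ≤
        lam ^ 2 * ∫ x in Set.Icc (0:ℝ) 1, f x ^ 2)
    (hcond : α * lam < 1) :
    (∃ s : ℝ → ℝ, IsLQGraphonNash W α β s) ∧
    (∀ s : ℝ → ℝ, IsLQGraphonNash W α β s → ∀ x ∈ Set.Icc (0:ℝ) 1,
      0 < s x ∧ s x = α * (∫ y in Set.Icc (0:ℝ) 1, W x y * s y) + β) ∧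
    (∀ s t : ℝ → ℝ, IsLQGraphonNash W α β s → IsLQGraphonNash W α β t →
      ∀ x ∈ Set.Icc (0:ℝ) 1, s x = t x) :=
  stmt_12_general W hmeas hbd α β lam hα hβ hlam hop hcond
end

section
/- In the linear quadratic graphon game with substitutes (U(s,z) = −½s² + s(αz+β), α < 0, β > 0, S(x) = ℝ_{≥0}, |α|·λ_max(𝕎) < 1), a strictly positive function s̄ ∈ L²([0,1]) is a Nash equilibrium if and only if s̄ = β·(I + |α|𝕎)^{−1} 1, i.e., s̄(x) + |α|∫₀¹ W(x,y) s̄(y) dy = β for a.e. x ∈ [0,1]. -/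
open MeasureTheory

theorem eq_max_zero_iff_of_pos {s v : ℝ} (hs : 0 < s) : s = max 0 v ↔ s = v := by
  constructor
  · intro h
    rwa [max_eq_right (le_of_not_ge fun hv => hs.ne' (h.trans (max_eq_left hv)))] at h
  · rintro rfl
    exact (max_eq_right hs.le).symm

theorem stmt_13_general (W : ℝ → ℝ → ℝ)
    (α β : ℝ) (hα : α < 0)
    (s : ℝ → ℝ)
    (hpos : ∀ x ∈ Set.Icc (0:ℝ) 1, 0 < s x) :
    (∀ x ∈ Set.Icc (0:ℝ) 1,
        s x = max 0 (α * (∫ y in Set.Icc (0:ℝ) 1, W x y * s y) + β)) ↔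
    (∀ x ∈ Set.Icc (0:ℝ) 1,
        s x + |α| * (∫ y in Set.Icc (0:ℝ) 1, W x y * s y) = β) := by
  refine forall₂_congr fun x hx => ?_
  rw [eq_max_zero_iff_of_pos (hpos x hx), abs_of_neg hα]
  constructor <;> intro h <;> linarith

/-- Linear quadratic graphon game with strategic substitutes (`α < 0`, `β > 0`,
`|α|·λ_max(𝕎) < 1`): a strictly positive square-integrable `s̄` is a Nash
equilibrium, i.e. `s̄(x) = max{0, α ∫ W(x,y)s̄(y)dy + β}` on `[0,1]`, if and only
if `s̄(x) + |α| ∫₀¹ W(x,y) s̄(y) dy = β` on `[0,1]` (i.e. `s̄ = β(I + |α|𝕎)⁻¹1`). -/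
theorem stmt_13 (W : ℝ → ℝ → ℝ)
    (hmeas : Measurable (Function.uncurry W))
    (hsym : ∀ x y, W x y = W y x)
    (hbd : ∀ x ∈ Set.Icc (0:ℝ) 1, ∀ y ∈ Set.Icc (0:ℝ) 1, W x y ∈ Set.Icc (0:ℝ) 1)
    (α β lam : ℝ) (hα : α < 0) (hβ : 0 < β) (hlam : 0 ≤ lam)
    (hop : ∀ f : ℝ → ℝ, Measurable f →
      IntegrableOn (fun x => f x ^ 2) (Set.Icc (0:ℝ) 1) →
      ∫ x in Set.Icc (0:ℝ) 1, (∫ y in Set.Icc (0:ℝ) 1, W x y * f y) ^ 2 ≤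
        lam ^ 2 * ∫ x in Set.Icc (0:ℝ) 1, f x ^ 2)
    (hcond : |α| * lam < 1)
    (s : ℝ → ℝ) (hs : Measurable s)
    (hint : IntegrableOn (fun x => s x ^ 2) (Set.Icc (0:ℝ) 1))
    (hpos : ∀ x ∈ Set.Icc (0:ℝ) 1, 0 < s x) :
    (∀ x ∈ Set.Icc (0:ℝ) 1,
        s x = max 0 (α * (∫ y in Set.Icc (0:ℝ) 1, W x y * s y) + β)) ↔
    (∀ x ∈ Set.Icc (0:ℝ) 1,
        s x + |α| * (∫ y in Set.Icc (0:ℝ) 1, W x y * s y) = β) :=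
  stmt_13_general W α β hα s hpos
end

section
/- Davis–Kahan type bound: let A and B = A + P be compact self-adjoint operators on a separable Hilbert space with orthonormal eigenbasis for A. Let λ₁ᴬ > λ₂ᴬ be the two largest eigenvalues of A with spectral gap δ = λ₁ᴬ − λ₂ᴬ > 0, let ψ₁ᴬ and ψ₁ᴮ be unit-norm dominant eigenfunctions of A and B respectively, chosen so that ⟨ψ₁ᴮ, ψ₁ᴬ⟩ ≥ 0. Then ‖ψ₁ᴬ − ψ₁ᴮ‖ ≤ 2√2 · ‖P‖ / δ. -/
/-!
Write `ψB = c • ψA + w` with `c = ⟪ψA, ψB⟫ ≥ 0` and `w ⊥ ψA`. On `ψAᗮ`, which is the orthogonal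
complement of the (simple) top eigenspace, `A` is compact self-adjoint with all eigenvalues
`≤ λ₂`, so the spectral theorem gives `⟪A w, w⟫ ≤ λ₂ ‖w‖²`. Hence
`δ ‖w‖² ≤ ⟪(λ₁ - A) w, w⟫ = ⟪(λ₁ - A) ψB, w⟫`, i.e. `δ ‖w‖ ≤ ‖(λ₁ - A) ψB‖ ≤ 2 ‖P‖`, the last
step because `|λ₁ - λ_B| = |‖A‖ - ‖B‖| ≤ ‖P‖`. Finally `‖ψA - ψB‖² = 2 (1 - c) ≤ 2 (1 - c²) = 2 ‖w‖²`.
-/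

open Module.End
open scoped InnerProductSpace

namespace ContinuousLinearMap

variable {𝕜 E : Type*} [RCLike 𝕜] [NormedAddCommGroup E] [InnerProductSpace 𝕜 E] {T : E →L[𝕜] E}

theorem reApplyInnerSelf_le_of_mem_eigenspace {r : ℝ}
    (h : ∀ μ, HasEigenvalue (T : E →ₗ[𝕜] E) μ → RCLike.re μ ≤ r) {μ : 𝕜} {v : E}
    (hv : v ∈ eigenspace (T : E →ₗ[𝕜] E) μ) : T.reApplyInnerSelf v ≤ r * ‖v‖ ^ 2 := by
  rcases eq_or_ne v 0 with rfl | hv0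
  · simp [reApplyInnerSelf_apply]
  have hμ : HasEigenvalue (T : E →ₗ[𝕜] E) μ := hasEigenvalue_of_hasEigenvector ⟨hv, hv0⟩
  rw [reApplyInnerSelf_apply, show T v = μ • v from mem_eigenspace_iff.mp hv, inner_smul_left,
    inner_self_eq_norm_sq_to_K, ← RCLike.ofReal_pow, RCLike.re_mul_ofReal, RCLike.conj_re]
  exact mul_le_mul_of_nonneg_right (h μ hμ) (sq_nonneg _)

theorem reApplyInnerSelf_le_of_mem_iSup_eigenspaces (hT : (T : E →ₗ[𝕜] E).IsSymmetric) {r : ℝ}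
    (h : ∀ μ, HasEigenvalue (T : E →ₗ[𝕜] E) μ → RCLike.re μ ≤ r) {x : E}
    (hx : x ∈ ⨆ μ, eigenspace (T : E →ₗ[𝕜] E) μ) : T.reApplyInnerSelf x ≤ r * ‖x‖ ^ 2 := by
  obtain ⟨f, hf, rfl⟩ := (Submodule.mem_iSup_iff_exists_finsupp _ x).mp hx
  have hTf μ : T (f μ) ∈ eigenspace (T : E →ₗ[𝕜] E) μ :=
    (show T (f μ) = μ • f μ from mem_eigenspace_iff.mp (hf μ)) ▸ Submodule.smul_mem _ μ (hf μ)
  have horth := hT.orthogonalFamily_eigenspaces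
  have hinner := horth.inner_sum (fun μ => ⟨T (f μ), hTf μ⟩) (fun μ => ⟨f μ, hf μ⟩) f.support
  have hnorm := horth.norm_sum (fun μ => ⟨f μ, hf μ⟩) f.support
  simp only [Submodule.coe_subtypeₗᵢ, Submodule.subtype_apply, Submodule.coe_inner,
    Submodule.coe_norm] at hinner hnorm
  rw [reApplyInnerSelf_apply, Finsupp.sum, map_sum, hinner, hnorm, map_sum, Finset.mul_sum]
  exact Finset.sum_le_sum fun μ _ => reApplyInnerSelf_le_of_mem_eigenspace h (hf μ)

variable [CompleteSpace E]

theorem reApplyInnerSelf_le_of_forall_hasEigenvalue_le (hTc : IsCompactOperator T)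
    (hT : (T : E →ₗ[𝕜] E).IsSymmetric) {r : ℝ}
    (h : ∀ μ, HasEigenvalue (T : E →ₗ[𝕜] E) μ → RCLike.re μ ≤ r) (x : E) :
    T.reApplyInnerSelf x ≤ r * ‖x‖ ^ 2 := by
  set V := ⨆ μ, eigenspace (T : E →ₗ[𝕜] E) μ
  have hdense : V.topologicalClosure = ⊤ := by
    rw [← Submodule.orthogonal_orthogonal_eq_closure,
      orthogonalComplement_iSup_eigenspaces_eq_bot hTc hT, Submodule.bot_orthogonal_eq_top]
  have hx : x ∈ closure (V : Set E) := by
    rw [← Submodule.topologicalClosure_coe, hdense]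
    trivial
  refine closure_minimal (fun y hy => reApplyInnerSelf_le_of_mem_iSup_eigenspaces hT h hy) ?_ hx
  exact isClosed_le T.reApplyInnerSelf_continuous (by fun_prop)

theorem reApplyInnerSelf_le_of_mem_orthogonal_eigenspace (hTc : IsCompactOperator T)
    (hT : (T : E →ₗ[𝕜] E).IsSymmetric) {μ₀ : 𝕜} {r : ℝ}
    (h : ∀ μ, HasEigenvalue (T : E →ₗ[𝕜] E) μ → μ ≠ μ₀ → RCLike.re μ ≤ r) {w : E}
    (hw : w ∈ (eigenspace (T : E →ₗ[𝕜] E) μ₀)ᗮ) : T.reApplyInnerSelf w ≤ r * ‖w‖ ^ 2 := by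
  set K := (eigenspace (T : E →ₗ[𝕜] E) μ₀)ᗮ
  have hK := hT.invariant_orthogonalComplement_eigenspace μ₀
  let S : K →L[𝕜] K := T.restrict hK
  have hS : ∀ μ, HasEigenvalue (S : K →ₗ[𝕜] K) μ → RCLike.re μ ≤ r := by
    intro μ hμ
    obtain ⟨v, hv⟩ := hμ.exists_hasEigenvector
    have hTv : T v = μ • (v : E) := congrArg Subtype.val hv.apply_eq_smul
    have hv0 : (v : E) ≠ 0 := by simpa using hv.2
    refine h μ (hasEigenvalue_of_hasEigenvector ⟨mem_eigenspace_iff.mpr hTv, hv0⟩) ?_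
    rintro rfl
    have hvbot : (v : E) ∈ eigenspace (T : E →ₗ[𝕜] E) μ ⊓ K := ⟨mem_eigenspace_iff.mpr hTv, v.2⟩
    rw [Submodule.inf_orthogonal_eq_bot, Submodule.mem_bot] at hvbot
    exact hv0 hvbot
  exact reApplyInnerSelf_le_of_forall_hasEigenvalue_le (hTc.restrict' hK)
    (hT.restrict_invariant hK) hS ⟨w, hw⟩

end ContinuousLinearMap

section DavisKahan

variable {H : Type*} [NormedAddCommGroup H] [InnerProductSpace ℝ H]

theorem norm_sub_le_sqrt_two_mul_norm_sub_inner_smul {u v : H} (hu : ‖u‖ = 1) (hv : ‖v‖ = 1)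
    (huv : 0 ≤ ⟪u, v⟫_ℝ) : ‖u - v‖ ≤ √2 * ‖v - ⟪u, v⟫_ℝ • u‖ := by
  refine (sq_le_sq₀ (norm_nonneg _) (by positivity)).mp ?_
  have hle : ⟪u, v⟫_ℝ ≤ 1 := by simpa [hu, hv] using real_inner_le_norm u v
  rw [mul_pow, Real.sq_sqrt zero_le_two, norm_sub_sq_real, norm_sub_sq_real, norm_smul,
    real_inner_smul_right, real_inner_comm u v, hu, hv, Real.norm_eq_abs, mul_one, sq_abs]
  nlinarith

theorem sub_mul_norm_sub_inner_smul_le {A : H →L[ℝ] H} {lam1 lam2 : ℝ} {ψ : H} (hψ : ‖ψ‖ = 1)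
    (hAψ : A ψ = lam1 • ψ) (hgap : ∀ w, ⟪ψ, w⟫_ℝ = 0 → ⟪A w, w⟫_ℝ ≤ lam2 * ‖w‖ ^ 2) (x : H) :
    (lam1 - lam2) * ‖x - ⟪ψ, x⟫_ℝ • ψ‖ ≤ ‖lam1 • x - A x‖ := by
  set w := x - ⟪ψ, x⟫_ℝ • ψ
  have hw : ⟪ψ, w⟫_ℝ = 0 := by
    rw [inner_sub_right, real_inner_smul_right, real_inner_self_eq_norm_sq, hψ]
    ring
  have hAw : lam1 • w - A w = lam1 • x - A x := by
    simp only [w, map_sub, map_smul, hAψ]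
    module
  have hw2 : (lam1 - lam2) * ‖w‖ ^ 2 ≤ ‖lam1 • x - A x‖ * ‖w‖ :=
    calc (lam1 - lam2) * ‖w‖ ^ 2 ≤ ⟪lam1 • w - A w, w⟫_ℝ := by
          rw [inner_sub_left, real_inner_smul_left, real_inner_self_eq_norm_sq]
          linarith [hgap w hw]
      _ ≤ ‖lam1 • x - A x‖ * ‖w‖ := hAw ▸ real_inner_le_norm _ _
  rcases (norm_nonneg w).eq_or_lt with h0 | hpos
  · rw [← h0, mul_zero]
    exact norm_nonneg _
  · nlinarith

theorem norm_norm_smul_sub_apply_le {E : Type*} [NormedAddCommGroup E] [NormedSpace ℝ E]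
    {A B : E →L[ℝ] E} {ψ : E} (hψ : ‖ψ‖ = 1) (hBψ : B ψ = ‖B‖ • ψ) :
    ‖‖A‖ • ψ - A ψ‖ ≤ 2 * ‖B - A‖ :=
  calc ‖‖A‖ • ψ - A ψ‖ = ‖(‖A‖ - ‖B‖) • ψ + (B - A) ψ‖ := by
        rw [sub_apply, hBψ]
        congr 1
        module
    _ ≤ |‖A‖ - ‖B‖| + ‖B - A‖ := by
        grw [norm_add_le, norm_smul, hψ, Real.norm_eq_abs, (B - A).le_opNorm ψ, hψ, mul_one,
          mul_one]
    _ ≤ 2 * ‖B - A‖ := by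
        linarith [abs_norm_sub_norm_le A B, norm_sub_rev A B]

end DavisKahan

theorem stmt_15_general {H : Type*} [NormedAddCommGroup H] [InnerProductSpace ℝ H]
    [CompleteSpace H]
    (A B P : H →L[ℝ] H) (hP : P = B - A)
    (hAsa : IsSelfAdjoint A) (hAc : IsCompactOperator A)
    (lam1 lam2 lamB : ℝ) (ψA ψB : H)
    (hgap : lam2 < lam1)
    (hA1 : A ψA = lam1 • ψA) (hψA : ‖ψA‖ = 1)
    (heig : ∀ μ : ℝ, (∃ v : H, v ≠ 0 ∧ A v = μ • v) → μ = lam1 ∨ μ ≤ lam2)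
    (hsimple : ∀ v : H, A v = lam1 • v → ∃ c : ℝ, v = c • ψA)
    (hB1 : B ψB = lamB • ψB) (hψB : ‖ψB‖ = 1)
    (hnA : ‖A‖ = lam1) (hnB : ‖B‖ = lamB)
    (hpos : 0 ≤ (inner ℝ ψB ψA : ℝ)) :
    ‖ψA - ψB‖ ≤ 2 * Real.sqrt 2 * ‖P‖ / (lam1 - lam2) := by
  have hspan : eigenspace (A : H →ₗ[ℝ] H) lam1 ≤ ℝ ∙ ψA := fun v hv => by
    obtain ⟨c, rfl⟩ := hsimple v (mem_eigenspace_iff.mp hv)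
    exact Submodule.smul_mem _ c (Submodule.mem_span_singleton_self ψA)
  have hgapA : ∀ w, ⟪ψA, w⟫_ℝ = 0 → ⟪A w, w⟫_ℝ ≤ lam2 * ‖w‖ ^ 2 := by
    intro w hw
    refine A.reApplyInnerSelf_le_of_mem_orthogonal_eigenspace hAc hAsa.isSymmetric
      (fun μ hμ hne => ?_)
      (Submodule.orthogonal_le hspan (Submodule.mem_orthogonal_singleton_iff_inner_right.mpr hw))
    obtain ⟨v, hv⟩ := hμ.exists_hasEigenvector
    exact (heig μ ⟨v, hv.2, hv.apply_eq_smul⟩).resolve_left hne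
  have hresidual : (lam1 - lam2) * ‖ψB - ⟪ψA, ψB⟫_ℝ • ψA‖ ≤ 2 * ‖P‖ := by
    have hweyl := norm_norm_smul_sub_apply_le (A := A) hψB (hnB ▸ hB1)
    rw [hnA, ← hP] at hweyl
    exact (sub_mul_norm_sub_inner_smul_le hψA hA1 hgapA ψB).trans hweyl
  calc ‖ψA - ψB‖ ≤ √2 * ‖ψB - ⟪ψA, ψB⟫_ℝ • ψA‖ :=
        norm_sub_le_sqrt_two_mul_norm_sub_inner_smul hψA hψB (real_inner_comm ψA ψB ▸ hpos)
    _ ≤ √2 * (2 * ‖P‖ / (lam1 - lam2)) := by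
        gcongr
        rwa [le_div_iff₀ (sub_pos.mpr hgap), mul_comm]
    _ = 2 * √2 * ‖P‖ / (lam1 - lam2) := by ring

/-- Davis–Kahan type bound: for compact self-adjoint operators `A` and `B = A + P`
on a separable Hilbert space, with `λ₁ > λ₂` the two largest eigenvalues of `A`
(the top eigenvalue being simple with unit eigenvector `ψA`), `ψB` a unit dominant
eigenvector of `B` with `⟨ψB, ψA⟩ ≥ 0`, and the top eigenvalues equal to the
respective operator norms, one has `‖ψA − ψB‖ ≤ 2√2 ‖P‖ / (λ₁ − λ₂)`. -/
theorem stmt_15 {H : Type*} [NormedAddCommGroup H] [InnerProductSpace ℝ H]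
    [CompleteSpace H] [TopologicalSpace.SeparableSpace H]
    (A B P : H →L[ℝ] H) (hP : P = B - A)
    (hAsa : IsSelfAdjoint A) (hBsa : IsSelfAdjoint B)
    (hAc : IsCompactOperator A) (hBc : IsCompactOperator B)
    (lam1 lam2 lamB : ℝ) (ψA ψB : H)
    (hgap : lam2 < lam1)
    (hA1 : A ψA = lam1 • ψA) (hψA : ‖ψA‖ = 1)
    (heig : ∀ μ : ℝ, (∃ v : H, v ≠ 0 ∧ A v = μ • v) → μ = lam1 ∨ μ ≤ lam2)
    (hsimple : ∀ v : H, A v = lam1 • v → ∃ c : ℝ, v = c • ψA)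
    (hB1 : B ψB = lamB • ψB) (hψB : ‖ψB‖ = 1)
    (hBtop : ∀ μ : ℝ, (∃ v : H, v ≠ 0 ∧ B v = μ • v) → μ ≤ lamB)
    (hnA : ‖A‖ = lam1) (hnB : ‖B‖ = lamB)
    (hpos : 0 ≤ (inner ℝ ψB ψA : ℝ)) :
    ‖ψA - ψB‖ ≤ 2 * Real.sqrt 2 * ‖P‖ / (lam1 - lam2) :=
  stmt_15_general A B P hP hAsa hAc lam1 lam2 lamB ψA ψB hgap hA1 hψA heig hsimple hB1 hψB hnA hnB
    hpos
end

section
/- Equivalence of network and graphon games: a vector (s¹,…,s^N) ∈ ℝ^{Nn} is a Nash equilibrium of the N-player network game with adjacency matrix P (where player i maximizes U(s^i, (1/N)Σ_j P_{ij}s^j) over S^i) if and only if the corresponding step function s(x) = s^i for x ∈ U_i is a Nash equilibrium of the graphon game with the step function graphon W(x,y) = P_{ij} for (x,y) ∈ U_i × U_j and strategy sets S(x) = S^i for x ∈ U_i. -/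
/-!
The pieces `unifPart N i` partition `[0,1]` into measurable sets of length `1/N`, so a function
taking the value `c j` on the `j`-th piece integrates over `[0,1]` to `N⁻¹ ∑ⱼ c j`. Applied to
`y ↦ W x y • sf y` with `x` in the `i`-th piece, this turns the graphon aggregate at `x` into
player `i`'s network aggregate; since `Sf` and `sf` are also constant on the pieces, the graphon
equilibrium condition at any `x` in the `i`-th piece is literally player `i`'s condition. As the
pieces are nonempty and cover `[0,1]`, the two equilibrium notions coincide.
-/

open MeasureTheory

/-- The `i`-th interval of the uniform partition of `[0,1]` into `N` pieces
(the last interval is closed at 1). -/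
noncomputable def unifPart (N : ℕ) (i : Fin N) : Set ℝ :=
  Set.Ico (((i : ℕ) : ℝ) / N) ((((i : ℕ) : ℝ) + 1) / N) ∪
    (if (i : ℕ) + 1 = N then {(1 : ℝ)} else ∅)

open Set Function

section UnifPart

variable {N : ℕ}

lemma le_of_mem_unifPart {i : Fin N} {y : ℝ} (hy : y ∈ unifPart N i) :
    ((i : ℕ) : ℝ) / N ≤ y := by
  rcases hy with hy | hy
  · exact hy.1
  · split_ifs at hy
    · rw [mem_singleton_iff.1 hy, div_le_one (by exact_mod_cast i.pos)]
      exact_mod_cast i.2.le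
    · exact hy.elim

lemma lt_of_mem_unifPart {i : Fin N} {y : ℝ} (hy : y ∈ unifPart N i) (hi : (i : ℕ) + 1 < N) :
    y < (((i : ℕ) : ℝ) + 1) / N := by
  rw [unifPart, if_neg hi.ne, union_empty] at hy
  exact hy.2

lemma pairwise_disjoint_unifPart : Pairwise (Disjoint on unifPart N) := by
  have hlt : ∀ i j : Fin N, i < j → Disjoint (unifPart N i) (unifPart N j) := by
    intro i j hij
    rw [disjoint_left]
    intro y hyi hyj
    have hij' : ((i : ℕ) : ℝ) + 1 ≤ (j : ℕ) := by exact_mod_cast hij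
    have : (((i : ℕ) : ℝ) + 1) / N ≤ ((j : ℕ) : ℝ) / N := by gcongr
    linarith [lt_of_mem_unifPart hyi (by omega), le_of_mem_unifPart hyj]
  intro i j hij
  rcases hij.lt_or_gt with h | h
  · exact hlt i j h
  · exact (hlt j i h).symm

lemma unifPart_subset_Icc (i : Fin N) : unifPart N i ⊆ Icc 0 1 := by
  intro y hy
  refine ⟨le_trans (by positivity) (le_of_mem_unifPart hy), ?_⟩
  rcases hy with hy | hy
  · have hN : (0 : ℝ) < N := by exact_mod_cast i.pos
    have hi : ((i : ℕ) : ℝ) + 1 ≤ N := by exact_mod_cast i.2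
    exact hy.2.le.trans ((div_le_one hN).2 hi)
  · split_ifs at hy
    · exact (mem_singleton_iff.1 hy).le
    · exact hy.elim

lemma div_mem_unifPart (i : Fin N) : ((i : ℕ) : ℝ) / N ∈ unifPart N i := by
  have hN : (0 : ℝ) < N := by exact_mod_cast i.pos
  exact Or.inl ⟨le_rfl, by gcongr; linarith⟩

lemma iUnion_unifPart (hN : 0 < N) : ⋃ i, unifPart N i = Icc 0 1 := by
  refine (iUnion_subset unifPart_subset_Icc).antisymm fun y ⟨hy0, hy1⟩ => mem_iUnion.2 ?_
  rcases hy1.lt_or_eq with hy1 | rfl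
  · have hN' : (0 : ℝ) < N := by exact_mod_cast hN
    have hNy : 0 ≤ (N : ℝ) * y := by positivity
    have hk : ⌊(N : ℝ) * y⌋₊ < N :=
      (Nat.floor_lt hNy).2 (mul_lt_of_lt_one_right hN' hy1)
    refine ⟨⟨_, hk⟩, Or.inl ⟨?_, ?_⟩⟩
    · rw [div_le_iff₀' hN']
      exact Nat.floor_le hNy
    · rw [lt_div_iff₀' hN']
      exact Nat.lt_floor_add_one _
  · exact ⟨⟨N - 1, by omega⟩, Or.inr (by simp [Nat.sub_add_cancel hN])⟩

lemma measurableSet_unifPart (i : Fin N) : MeasurableSet (unifPart N i) :=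
  measurableSet_Ico.union (by split_ifs <;> simp)

lemma volume_real_unifPart (i : Fin N) : volume.real (unifPart N i) = (N : ℝ)⁻¹ := by
  have hN : (0 : ℝ) < N := by exact_mod_cast i.pos
  rw [unifPart, measureReal_congr (union_ae_eq_left_of_ae_eq_empty (ae_eq_empty.2 ?_)),
    Real.volume_real_Ico_of_le (by gcongr; linarith)]
  · field_simp
    ring
  · split_ifs <;> simp

theorem setIntegral_Icc_eq_of_eqOn_unifPart {E : Type*} [NormedAddCommGroup E]
    [NormedSpace ℝ E] [CompleteSpace E] (hN : 0 < N) {f : ℝ → E} {c : Fin N → E}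
    (hf : ∀ j, EqOn f (fun _ => c j) (unifPart N j)) :
    ∫ y in Icc 0 1, f y = (N : ℝ)⁻¹ • ∑ j, c j := by
  have hint : ∀ j, IntegrableOn f (unifPart N j) := fun j =>
    (integrableOn_congr_fun (hf j) (measurableSet_unifPart j)).2 <|
      integrableOn_const ((measure_mono (unifPart_subset_Icc j)).trans_lt measure_Icc_lt_top).ne
  calc ∫ y in Icc 0 1, f y = ∑ j, ∫ y in unifPart N j, f y := by
        rw [← iUnion_unifPart hN,
          integral_iUnion_fintype measurableSet_unifPart pairwise_disjoint_unifPart hint]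
    _ = ∑ j, (N : ℝ)⁻¹ • c j := by
        congr 1 with j
        rw [setIntegral_congr_fun (measurableSet_unifPart j) (hf j), setIntegral_const,
          volume_real_unifPart]
    _ = (N : ℝ)⁻¹ • ∑ j, c j := (Finset.smul_sum ..).symm

end UnifPart

/-- Equivalence of network and graphon games: `(s¹,…,s^N)` is a Nash equilibrium of
the `N`-player network game with adjacency matrix `P` (player `i` maximizes
`U(sⁱ, (1/N)Σⱼ P_{ij} sʲ)` over `Sᵢ`) iff the corresponding step function is a Nash
equilibrium of the graphon game with the step graphon `W(x,y) = P_{ij}` on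
`U_i × U_j` and strategy sets `S(x) = Sᵢ` on `U_i`. -/
theorem stmt_18 {n N : ℕ} (hN : 0 < N)
    (Upay : EuclideanSpace ℝ (Fin n) → EuclideanSpace ℝ (Fin n) → ℝ)
    (P : Fin N → Fin N → ℝ)
    (Sv : Fin N → Set (EuclideanSpace ℝ (Fin n)))
    (s : Fin N → EuclideanSpace ℝ (Fin n))
    (W : ℝ → ℝ → ℝ)
    (hW : ∀ i j : Fin N, ∀ x ∈ unifPart N i, ∀ y ∈ unifPart N j, W x y = P i j)
    (Sf : ℝ → Set (EuclideanSpace ℝ (Fin n)))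
    (hSf : ∀ i : Fin N, ∀ x ∈ unifPart N i, Sf x = Sv i)
    (sf : ℝ → EuclideanSpace ℝ (Fin n))
    (hsf : ∀ i : Fin N, ∀ x ∈ unifPart N i, sf x = s i) :
    (∀ i : Fin N, s i ∈ Sv i ∧ ∀ s' ∈ Sv i,
        Upay s' ((N : ℝ)⁻¹ • ∑ j, P i j • s j) ≤
          Upay (s i) ((N : ℝ)⁻¹ • ∑ j, P i j • s j)) ↔
    (∀ x ∈ Set.Icc (0:ℝ) 1, sf x ∈ Sf x ∧ ∀ s' ∈ Sf x,
        Upay s' (∫ y in Set.Icc (0:ℝ) 1, W x y • sf y) ≤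
          Upay (sf x) (∫ y in Set.Icc (0:ℝ) 1, W x y • sf y)) := by
  have hpiece : ∀ i, ∀ x ∈ unifPart N i,
      (sf x ∈ Sf x ∧ ∀ s' ∈ Sf x, Upay s' (∫ y in Icc (0:ℝ) 1, W x y • sf y) ≤
          Upay (sf x) (∫ y in Icc (0:ℝ) 1, W x y • sf y)) ↔
        (s i ∈ Sv i ∧ ∀ s' ∈ Sv i, Upay s' ((N : ℝ)⁻¹ • ∑ j, P i j • s j) ≤
          Upay (s i) ((N : ℝ)⁻¹ • ∑ j, P i j • s j)) := by
    intro i x hx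
    have hagg : ∫ y in Icc (0:ℝ) 1, W x y • sf y = (N : ℝ)⁻¹ • ∑ j, P i j • s j :=
      setIntegral_Icc_eq_of_eqOn_unifPart hN fun j y hy => by
        simp only [hW i j x hx y hy, hsf j y hy]
    rw [hSf i x hx, hsf i x hx, hagg]
  constructor
  · intro h x hx
    rw [← iUnion_unifPart hN, mem_iUnion] at hx
    obtain ⟨i, hxi⟩ := hx
    exact (hpiece i x hxi).2 (h i)
  · intro h i
    exact (hpiece i _ (div_mem_unifPart i)).1 (h _ (unifPart_subset_Icc i (div_mem_unifPart i)))
end
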